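/- arXiv:1807.04026 — 4 statements merged into one kernel-verified Lean document; each statement's English description precedes it below -/
import Mathlib

section
/- For a continuous linear functional ℓ on R^X (product topology over a topological ring R), ℓ lies in the image of λ_X if and only if the function x ↦ ℓ(δ_x) has finite support; in that case ℓ = λ_X of that function. -/
/-!
Every `f : X → R` is the sum of the family `x ↦ f x • δ_x`, which converges in the product
topology. A continuous linear `ℓ` therefore sends `f` to the sum of `f x • ℓ δ_x`; when
`x ↦ ℓ δ_x` has finite support this sum is finite, and uniqueness of limits (`R` is Hausdorff)
identifies it with `ℓ f`. Conversely, evaluating a representation `ℓ = λ_X p` at `δ_x` gives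
`ℓ δ_x = p x`, so the support is that of `p`.
-/

section

variable {X : Type*} [DecidableEq X]

theorem hasSum_pi_single_self {M : Type*} [AddCommMonoid M] [TopologicalSpace M] (f : X → M) :
    HasSum (fun x => Pi.single x (f x)) f := by
  refine Pi.hasSum.2 fun y => ?_
  convert hasSum_pi_single y (f y) using 1
  ext x
  by_cases h : x = y
  · subst h; simp
  · simp [h, Ne.symm h]

variable {R M : Type*} [Semiring R] [TopologicalSpace R] [AddCommMonoid M] [Module R M]
  [TopologicalSpace M]

theorem ContinuousLinearMap.hasSum_smul_apply_pi_single (ℓ : (X → R) →L[R] M) (f : X → R) :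
    HasSum (fun x => f x • ℓ (Pi.single x 1)) (ℓ f) := by
  have h_single : ∀ x, Pi.single x (f x) = f x • (Pi.single x 1 : X → R) := fun x => by
    rw [← Pi.single_smul', smul_eq_mul, mul_one]
  simpa [h_single] using (hasSum_pi_single_self f).mapL ℓ

theorem ContinuousLinearMap.apply_eq_finsupp_sum [T2Space M] (ℓ : (X → R) →L[R] M) (p : X →₀ M)
    (hp : ∀ x, p x = ℓ (Pi.single x 1)) (f : X → R) :
    ℓ f = p.sum fun x m => f x • m := by
  refine (ℓ.hasSum_smul_apply_pi_single f).unique ?_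
  simp_rw [← hp]
  exact hasSum_sum_of_ne_finset_zero fun x hx => by simp [Finsupp.notMem_support_iff.mp hx]

end

theorem Finsupp.sum_mul_pi_single_one {X R : Type*} [DecidableEq X] [Semiring R] (p : X →₀ R)
    (x : X) : (p.sum fun y c => c * (Pi.single x 1 : X → R) y) = p x := by
  simp [Pi.single_apply]

theorem stmt3_general (R X : Type*) [CommRing R] [TopologicalSpace R] [T2Space R]
    [DecidableEq X] (ℓ : (X → R) →L[R] R) :
    ((∃ p : X →₀ R, ∀ f, ℓ f = p.sum fun x c => c * f x) ↔
      {x : X | ℓ (Pi.single x 1) ≠ 0}.Finite) ∧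
    (∀ p : X →₀ R, (∀ x, p x = ℓ (Pi.single x 1)) →
      ∀ f, ℓ f = p.sum fun x c => c * f x) := by
  have h_rep : ∀ p : X →₀ R, (∀ x, p x = ℓ (Pi.single x 1)) →
      ∀ f, ℓ f = p.sum fun x c => c * f x := fun p hp f => by
    simpa only [smul_eq_mul, mul_comm] using ℓ.apply_eq_finsupp_sum p hp f
  refine ⟨⟨?_, fun hfin => ⟨Finsupp.ofSupportFinite _ hfin, h_rep _ fun _ => rfl⟩⟩, h_rep⟩
  rintro ⟨p, hp⟩
  refine p.hasFiniteSupport.subset fun x (hx : ℓ (Pi.single x 1) ≠ 0) => ?_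
  rwa [hp, Finsupp.sum_mul_pi_single_one] at hx

/-- A continuous linear functional `ℓ` on `R^X` is in the image of `λ_X` iff
`x ↦ ℓ δ_x` has finite support; and in that case `ℓ = λ_X` of that function. -/
theorem stmt3 (R X : Type*) [CommRing R] [TopologicalSpace R] [IsTopologicalRing R] [T2Space R]
    [DecidableEq X] (ℓ : (X → R) →L[R] R) :
    ((∃ p : X →₀ R, ∀ f, ℓ f = p.sum fun x c => c * f x) ↔
      {x : X | ℓ (Pi.single x 1) ≠ 0}.Finite) ∧
    (∀ p : X →₀ R, (∀ x, p x = ℓ (Pi.single x 1)) →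
      ∀ f, ℓ f = p.sum fun x c => c * f x) :=
  stmt3_general R X ℓ
end

section
/- Let R be a commutative von Neumann regular topological ring such that 0 is not in the closure of the set of nonzero idempotents of R. Then R is rigid: for every set X, every continuous R-linear functional on R^X (product topology) vanishes on δ_x for all but finitely many x ∈ X. -/
/-!
A neighbourhood of `0` in `R^X` constrains only finitely many coordinates, so by continuity
`ℓ (r • δ_x)` avoids the nonzero idempotents for every `r` and every `x` off a finite set.
But if `a := ℓ δ_x ≠ 0` and `a = a a† a`, then `ℓ (a† • δ_x) = a† a` is a nonzero idempotent.
-/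

open Filter Topology

theorem exists_finite_forall_apply_single_mem {X M Y : Type*} [DecidableEq X] [Zero M]
    [TopologicalSpace M] [TopologicalSpace Y] {f : (X → M) → Y} (hf : ContinuousAt f 0)
    {U : Set Y} (hU : U ∈ 𝓝 (f 0)) :
    ∃ I : Set X, I.Finite ∧ ∀ x ∉ I, ∀ m : M, f (Pi.single x m) ∈ U := by
  have hpre : f ⁻¹' U ∈ 𝓝 (0 : X → M) := hf hU
  rw [nhds_pi, mem_pi] at hpre
  obtain ⟨I, hI, t, ht, hsub⟩ := hpre
  refine ⟨I, hI, fun x hx m => hsub fun i hi => ?_⟩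
  rw [Pi.single_eq_of_ne (ne_of_mem_of_not_mem hi hx)]
  exact mem_of_mem_nhds (ht i)

theorem isIdempotentElem_mul_of_eq_mul_mul {S : Type*} [Semigroup S] {a b : S}
    (h : a = a * b * a) : IsIdempotentElem (b * a) := by
  calc b * a * (b * a) = b * (a * b * a) := by simp only [mul_assoc]
    _ = b * a := by rw [← h]

theorem mul_ne_zero_of_eq_mul_mul {S : Type*} [SemigroupWithZero S] {a b : S}
    (h : a = a * b * a) (ha : a ≠ 0) : b * a ≠ 0 := by
  intro hba
  exact ha (by rw [h, mul_assoc, hba, mul_zero])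

theorem stmt9_general (R : Type*) [CommRing R] [TopologicalSpace R]
    (dag : R → R) (hdag : ∀ x : R, x = x * dag x * x ∧ dag x = dag x * x * dag x)
    (h0 : (0 : R) ∉ closure {e : R | IsIdempotentElem e ∧ e ≠ 0})
    (X : Type*) [DecidableEq X] (ℓ : (X → R) →L[R] R) :
    {x : X | ℓ (Pi.single x 1) ≠ 0}.Finite := by
  have hU : (closure {e : R | IsIdempotentElem e ∧ e ≠ 0})ᶜ ∈ 𝓝 (ℓ 0) := by
    rw [map_zero]
    exact isClosed_closure.isOpen_compl.mem_nhds h0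
  obtain ⟨I, hI, hI_single⟩ := exists_finite_forall_apply_single_mem ℓ.continuous.continuousAt hU
  refine hI.subset fun x hx => by_contra fun hxI => ?_
  set a := ℓ (Pi.single x 1)
  have hℓ : ℓ (Pi.single x (dag a)) = dag a * a := by
    simpa [← Pi.single_smul'] using ℓ.map_smul (dag a) (Pi.single x 1)
  apply hI_single x hxI (dag a)
  rw [hℓ]
  exact subset_closure
    ⟨isIdempotentElem_mul_of_eq_mul_mul (hdag a).1, mul_ne_zero_of_eq_mul_mul (hdag a).1 hx⟩

/-- A commutative von Neumann regular topological ring with `0` not in the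
closure of the nonzero idempotents is rigid. -/
theorem stmt9 (R : Type*) [CommRing R] [TopologicalSpace R] [IsTopologicalRing R] [T2Space R]
    (dag : R → R) (hdag : ∀ x : R, x = x * dag x * x ∧ dag x = dag x * x * dag x)
    (h0 : (0 : R) ∉ closure {e : R | IsIdempotentElem e ∧ e ≠ 0})
    (X : Type*) [DecidableEq X] (ℓ : (X → R) →L[R] R) :
    {x : X | ℓ (Pi.single x 1) ≠ 0}.Finite :=
  stmt9_general R dag hdag h0 X ℓ
end

section
/- For any topological ring R and any infinite set X, the topological ring R^X (with product topology) is not rigid: there exists a continuous R^X-linear functional ℓ : (R^X)^X → R^X such that ℓ(δ_x) ≠ 0 for infinitely many x (in fact for all x ∈ X), namely ℓ(f)(x) = f(x)(x). -/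
def Pi.diagonalCLM (R M X : Type*) [Semiring R] [AddCommMonoid M] [Module R M]
    [TopologicalSpace M] : (X → X → M) →L[X → R] (X → M) where
  toFun f x := f x x
  map_add' _ _ := rfl
  map_smul' _ _ := rfl
  cont := continuous_pi fun x => (continuous_apply x).comp (continuous_apply x)

@[simp]
theorem Pi.diagonalCLM_apply {R M X : Type*} [Semiring R] [AddCommMonoid M] [Module R M]
    [TopologicalSpace M] (f : X → X → M) (x : X) : Pi.diagonalCLM R M X f x = f x x :=
  rfl

theorem Pi.diagonalCLM_single_one_ne_zero {R X : Type*} [Semiring R] [Nontrivial R]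
    [TopologicalSpace R] [DecidableEq X] (x : X) :
    Pi.diagonalCLM R R X (Pi.single x 1) ≠ 0 := fun h => by
  simpa using congrFun h x

theorem stmt10_general (R : Type*) [CommRing R] [TopologicalSpace R]
    [Nontrivial R] (X : Type*) [Infinite X] [DecidableEq X] :
    ∃ ℓ : (X → (X → R)) →L[X → R] (X → R),
      (∀ f x, ℓ f x = f x x) ∧
      {x : X | ℓ (Pi.single x 1) ≠ 0}.Infinite ∧
      ∀ x : X, ℓ (Pi.single x 1) ≠ 0 :=
  ⟨Pi.diagonalCLM R R X, Pi.diagonalCLM_apply,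
    Set.infinite_univ.mono fun x _ => Pi.diagonalCLM_single_one_ne_zero x,
    Pi.diagonalCLM_single_one_ne_zero⟩

/-- For any (nontrivial) topological ring `R` and any infinite set `X`, the
topological ring `R^X` is not rigid: the continuous `R^X`-linear functional
`ℓ f x = f x x` on `(R^X)^X` has `ℓ δ_x ≠ 0` for all (hence infinitely many) `x`. -/
theorem stmt10 (R : Type*) [CommRing R] [TopologicalSpace R] [IsTopologicalRing R] [T2Space R]
    [Nontrivial R] (X : Type*) [Infinite X] [DecidableEq X] :
    ∃ ℓ : (X → (X → R)) →L[X → R] (X → R),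
      (∀ f x, ℓ f x = f x x) ∧
      {x : X | ℓ (Pi.single x 1) ≠ 0}.Infinite ∧
      ∀ x : X, ℓ (Pi.single x 1) ≠ 0 :=
  stmt10_general R X
end

section
/- If R is a rigid topological ring and I is a finite set, then the product topological ring R^I is rigid. -/
universe u

/-- A topological ring is rigid when for every set `X`, every continuous linear
functional on `R^X` (product topology) has `x ↦ ℓ δ_x` finitely supported. -/
def IsRigid (R : Type u) [CommRing R] [TopologicalSpace R] : Prop :=
  ∀ (X : Type u) [DecidableEq X] (ℓ : (X → R) →L[R] R),
    {x : X | ℓ (Pi.single x 1) ≠ 0}.Finite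

/-! The `i`-th coordinate of an `R^I`-linear functional on `(R^I)^X`, precomposed with the
diagonal embedding `R^X → (R^I)^X`, is an `R`-linear functional on `R^X` that sees the
same values on the basis vectors `δ_x`. Hence the support of `x ↦ ℓ δ_x` is a finite union
of supports of continuous `R`-linear functionals on `R^X`. -/

namespace ContinuousLinearMap

variable {R : Type*} [CommRing R] [TopologicalSpace R] {I X : Type*}

/-- `f ↦ (ℓ (x ↦ const (f x))) i`. -/
def piComponent (ℓ : (X → I → R) →L[I → R] (I → R)) (i : I) : (X → R) →L[R] R :=
  (proj i).comp ((ℓ.restrictScalars R).comp (pi fun x => pi fun _ => proj x))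

theorem piComponent_single [DecidableEq X] (ℓ : (X → I → R) →L[I → R] (I → R)) (i : I)
    (x : X) : ℓ.piComponent i (Pi.single x 1) = ℓ (Pi.single x 1) i := by
  have hsingle : (fun y (_ : I) => (Pi.single x (1 : R) : X → R) y) = Pi.single x 1 := by
    ext y j
    by_cases hy : y = x
    · subst hy; simp
    · simp [hy]
  simp [piComponent, ← hsingle]

theorem setOf_apply_single_ne_zero_subset [DecidableEq X]
    (ℓ : (X → I → R) →L[I → R] (I → R)) :
    {x : X | ℓ (Pi.single x 1) ≠ 0} ⊆ ⋃ i, {x : X | ℓ.piComponent i (Pi.single x 1) ≠ 0} := by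
  intro x hx
  obtain ⟨i, hi⟩ := Function.ne_iff.mp hx
  exact Set.mem_iUnion.mpr ⟨i, by simpa [piComponent_single] using hi⟩

end ContinuousLinearMap

theorem stmt11_general {R : Type u} [CommRing R] [TopologicalSpace R]
    (I : Type u) [Finite I] (h : IsRigid R) : IsRigid (I → R) := fun X _ ℓ =>
  (Set.finite_iUnion fun i => h X (ℓ.piComponent i)).subset
    ℓ.setOf_apply_single_ne_zero_subset

/-- If `R` is a rigid topological ring and `I` is finite, then `R^I` is rigid. -/
theorem stmt11 {R : Type u} [CommRing R] [TopologicalSpace R] [IsTopologicalRing R] [T2Space R]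
    (I : Type u) [Finite I] (h : IsRigid R) : IsRigid (I → R) :=
  stmt11_general I h
end
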